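/- Suppose E_c ≥ ε/(1−ε). Then no lattice site can be overcritical in two successive time steps of an avalanche: along any relaxation orbit starting from a stable configuration plus one unit of energy, the maximal site energy stays bounded by max{E_c/ε, E_c + 1}, and consequently, for all n, any two sites that are simultaneously overcritical at step n are at even d_Λ-distance from each other; in particular they are never nearest neighbors. -/

import Mathlib

open Finset

/-- Sites of the lattice cube `[1,L]^d ⊆ ℤ^d`. -/
abbrev Site (d L : ℕ) := Fin d → Fin L

/-- Manhattan metric on the lattice. -/
def dLam {d L : ℕ} (i j : Site d L) : ℕ :=
  ∑ n : Fin d, ((i n : ℤ) - (j n : ℤ)).natAbs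

/-- Heaviside function: `θ a = 1` if `a > 0`, else `0`. -/
noncomputable def theta (a : ℝ) : ℝ := if 0 < a then 1 else 0

/-- The Zhang relaxation map. -/
noncomputable def zhangF (d L : ℕ) (Ec ε : ℝ) (x : Site d L → ℝ) : Site d L → ℝ :=
  fun i => x i - theta (x i - Ec) * (1 - ε) * x i
    + ((1 - ε) / (2 * d)) * ∑ j ∈ univ.filter (fun j => dLam i j = 1), theta (x j - Ec) * x j

/-- 1-norm of a configuration. -/
noncomputable def norm1 {d L : ℕ} (x : Site d L → ℝ) : ℝ := ∑ i, |x i|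

/-!
Colour the sites by the parity of their coordinate sum; neighbours have opposite colours. By
induction on `n`, all energies of the `n`-th configuration lie in `[0, Ec / ε]` and all its
overcritical sites have the colour of `i` shifted by `n`. An overcritical site has no overcritical
neighbour, so it receives nothing and keeps `ε` times its energy, at most `Ec`. A subcritical
site receives at most `(1 - ε) Ec / ε` from its at most `2d` neighbours, so stays below `Ec / ε`,
and becomes overcritical only by receiving energy from an overcritical neighbour, of the other
colour. The hypothesis `ε / (1 - ε) ≤ Ec` is `Ec + 1 ≤ Ec / ε`, which starts the induction.
-/

def Site.parity {d L : ℕ} (j : Site d L) : ZMod 2 := ∑ n, ((j n : ℕ) : ZMod 2)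

section Lattice

variable {d L : ℕ}

lemma natCast_dLam_zmod_two (j k : Site d L) : (dLam j k : ZMod 2) = j.parity + k.parity := by
  simp only [dLam, Site.parity, Nat.cast_sum, ZMod.natAbs_mod_two, Int.cast_sub, Int.cast_natCast]
  simp only [sub_eq_add_neg, ZMod.neg_eq_self_mod_two, sum_add_distrib]

lemma even_dLam_iff (j k : Site d L) : Even (dLam j k) ↔ j.parity = k.parity := by
  rw [← ZMod.natCast_eq_zero_iff_even, natCast_dLam_zmod_two, add_eq_zero_iff_eq_neg,
    ZMod.neg_eq_self_mod_two]

lemma parity_eq_add_one_of_dLam_eq_one {j k : Site d L} (h : dLam j k = 1) :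
    j.parity = k.parity + 1 := by
  have h' : j.parity + k.parity = 1 := by rw [← natCast_dLam_zmod_two, h, Nat.cast_one]
  rw [eq_sub_of_add_eq h', sub_eq_add_neg, ZMod.neg_eq_self_mod_two, add_comm]

lemma exists_coord_of_dLam_eq_one {j k : Site d L} (h : dLam j k = 1) :
    ∃ n, ((j n : ℤ) - k n).natAbs = 1 ∧ ∀ m ≠ n, j m = k m := by
  set g : Fin d → ℕ := fun m => ((j m : ℤ) - k m).natAbs
  have hg : ∑ m, g m = 1 := h
  obtain ⟨n, -, hn⟩ := exists_ne_zero_of_sum_ne_zero (hg ▸ one_ne_zero)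
  have hsplit := add_sum_erase univ g (mem_univ n)
  have hgn : g n = 1 := by omega
  have hrest : ∑ m ∈ univ.erase n, g m = 0 := by omega
  refine ⟨n, hgn, fun m hm => Fin.ext ?_⟩
  have hm0 : g m = 0 := sum_eq_zero_iff.1 hrest m (mem_erase.2 ⟨hm, mem_univ m⟩)
  simp only [g] at hm0
  omega

lemma card_filter_dLam_eq_one_le (j : Site d L) : #{k | dLam j k = 1} ≤ 2 * d := by
  choose dir hdir using fun k : {k // dLam j k = 1} => exists_coord_of_dLam_eq_one k.2
  have hinj : Function.Injective fun k => (dir k, decide ((j (dir k) : ℤ) < k.1 (dir k))) := by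
    rintro a b hab
    simp only [Prod.mk.injEq, decide_eq_decide] at hab
    obtain ⟨hdir_eq, hside⟩ := hab
    obtain ⟨ha1, ha⟩ := hdir a
    obtain ⟨hb1, hb⟩ := hdir b
    rw [← hdir_eq] at hb1 hb hside
    refine Subtype.ext (funext fun m => ?_)
    by_cases hm : m = dir a
    · subst hm
      exact Fin.ext (by omega)
    · rw [← ha m hm, hb m hm]
  simpa [Fintype.card_subtype, mul_comm] using Fintype.card_le_of_injective _ hinj

end Lattice

lemma theta_of_pos {a : ℝ} (h : 0 < a) : theta a = 1 := if_pos h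

lemma theta_of_nonpos {a : ℝ} (h : a ≤ 0) : theta a = 0 := if_neg h.not_gt

lemma theta_nonneg (a : ℝ) : 0 ≤ theta a := by
  unfold theta; split_ifs <;> norm_num

lemma theta_le_one (a : ℝ) : theta a ≤ 1 := by
  unfold theta; split_ifs <;> norm_num

section Relaxation

variable {d L : ℕ} {Ec ε : ℝ} {w : Site d L → ℝ}

noncomputable def inflow (d L : ℕ) (Ec ε : ℝ) (w : Site d L → ℝ) (j : Site d L) : ℝ :=
  (1 - ε) / (2 * d) * ∑ k ∈ univ.filter (fun k => dLam j k = 1), theta (w k - Ec) * w k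

lemma zhangF_apply (j : Site d L) :
    zhangF d L Ec ε w j = w j - theta (w j - Ec) * (1 - ε) * w j + inflow d L Ec ε w j :=
  rfl

lemma zhangF_apply_of_le {j : Site d L} (h : w j ≤ Ec) :
    zhangF d L Ec ε w j = w j + inflow d L Ec ε w j := by
  rw [zhangF_apply, theta_of_nonpos (sub_nonpos.2 h)]
  ring

lemma zhangF_apply_of_lt {j : Site d L} (h : Ec < w j) (hin : inflow d L Ec ε w j = 0) :
    zhangF d L Ec ε w j = ε * w j := by
  rw [zhangF_apply, theta_of_pos (sub_pos.2 h), hin]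
  ring

lemma inflow_nonneg (hε : ε ≤ 1) (hw : ∀ k, 0 ≤ w k) (j : Site d L) :
    0 ≤ inflow d L Ec ε w j :=
  mul_nonneg (by positivity [sub_nonneg.2 hε])
    (sum_nonneg fun k _ => mul_nonneg (theta_nonneg _) (hw k))

lemma inflow_le {B : ℝ} (hε : ε ≤ 1) (hw : ∀ k, 0 ≤ w k) (hwB : ∀ k, w k ≤ B) (hB : 0 ≤ B)
    (j : Site d L) : inflow d L Ec ε w j ≤ (1 - ε) * B := by
  have hsum : ∑ k ∈ univ.filter (fun k => dLam j k = 1), theta (w k - Ec) * w k ≤ 2 * d * B :=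
    calc _ ≤ ∑ k ∈ univ.filter (fun k => dLam j k = 1), B :=
          sum_le_sum fun k _ => (mul_le_of_le_one_left (hw k) (theta_le_one _)).trans (hwB k)
      _ = #{k | dLam j k = 1} * B := by rw [sum_const, nsmul_eq_mul]
      _ ≤ 2 * d * B := by
          gcongr
          exact_mod_cast card_filter_dLam_eq_one_le j
  rcases d.eq_zero_or_pos with rfl | hd
  · simp [inflow, mul_nonneg (sub_nonneg.2 hε) hB]
  calc inflow d L Ec ε w j ≤ (1 - ε) / (2 * d) * (2 * d * B) :=
        mul_le_mul_of_nonneg_left hsum (by positivity [sub_nonneg.2 hε])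
    _ = (1 - ε) * B := by field_simp

lemma inflow_eq_zero {j : Site d L} (h : ∀ k, dLam j k = 1 → w k ≤ Ec) :
    inflow d L Ec ε w j = 0 := by
  refine mul_eq_zero_of_right _ (sum_eq_zero fun k hk => ?_)
  rw [theta_of_nonpos (sub_nonpos.2 (h k (mem_filter.1 hk).2)), zero_mul]

end Relaxation

structure AvalancheInvariant {d L : ℕ} (Ec ε : ℝ) (p : ZMod 2) (w : Site d L → ℝ) : Prop where
  nonneg : ∀ j, 0 ≤ w j
  le_div : ∀ j, w j ≤ Ec / ε
  parity_eq : ∀ j, Ec < w j → j.parity = p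

namespace AvalancheInvariant

variable {d L : ℕ} {Ec ε : ℝ} {p : ZMod 2} {w : Site d L → ℝ}

lemma step (hε0 : 0 < ε) (hε1 : ε < 1) (h : AvalancheInvariant Ec ε p w) :
    AvalancheInvariant Ec ε (p + 1) (zhangF d L Ec ε w) := by
  suffices ∀ j, 0 ≤ zhangF d L Ec ε w j ∧ zhangF d L Ec ε w j ≤ Ec / ε ∧
      (Ec < zhangF d L Ec ε w j → j.parity = p + 1) from
    ⟨fun j => (this j).1, fun j => (this j).2.1, fun j => (this j).2.2⟩
  intro j
  rcases lt_or_ge Ec (w j) with hover | hsub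
  · -- both ends of an edge cannot be overcritical, so an overcritical site receives nothing
    have hquiet : ∀ k, dLam j k = 1 → w k ≤ Ec := fun k hk => not_lt.1 fun hk' => by
      have := parity_eq_add_one_of_dLam_eq_one hk
      rw [h.parity_eq j hover, h.parity_eq k hk'] at this
      simp at this
    have hwj : ε * w j ≤ Ec := by
      have := h.le_div j
      rwa [le_div_iff₀ hε0, mul_comm] at this
    rw [zhangF_apply_of_lt hover (inflow_eq_zero hquiet)]
    refine ⟨mul_nonneg hε0.le (h.nonneg j), ?_, fun h' => absurd hwj (not_le.2 h')⟩
    exact (mul_le_of_le_one_left (h.nonneg j) hε1.le).trans (h.le_div j)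
  · rw [zhangF_apply_of_le hsub]
    refine ⟨add_nonneg (h.nonneg j) (inflow_nonneg hε1.le h.nonneg j), ?_, fun hnext => ?_⟩
    · have hB := inflow_le hε1.le h.nonneg h.le_div ((h.nonneg j).trans (h.le_div j)) j (Ec := Ec)
      calc w j + inflow d L Ec ε w j ≤ Ec + (1 - ε) * (Ec / ε) := add_le_add hsub hB
        _ = Ec / ε := by field_simp; ring
    · have : inflow d L Ec ε w j ≠ 0 := fun h0 => by linarith
      obtain ⟨k, hk, hkover⟩ : ∃ k, dLam j k = 1 ∧ Ec < w k := by
        by_contra! hnone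
        exact this (inflow_eq_zero hnone)
      rw [parity_eq_add_one_of_dLam_eq_one hk, h.parity_eq k hkover]

lemma iterate (hε0 : 0 < ε) (hε1 : ε < 1) (h : AvalancheInvariant Ec ε p w) (n : ℕ) :
    AvalancheInvariant Ec ε (p + n) ((zhangF d L Ec ε)^[n] w) := by
  induction n with
  | zero => simpa using h
  | succ n ih =>
    rw [Function.iterate_succ_apply', Nat.cast_succ, ← add_assoc]
    exact ih.step hε0 hε1

end AvalancheInvariant

lemma avalancheInvariant_add_unit {d L : ℕ} {Ec ε : ℝ} (hε0 : 0 < ε) (hε1 : ε < 1)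
    (hE : ε / (1 - ε) ≤ Ec) {x : Site d L → ℝ} (hx : ∀ j, 0 ≤ x j) (hxM : ∀ j, x j ≤ Ec)
    (i : Site d L) :
    AvalancheInvariant Ec ε i.parity (fun j => x j + if j = i then 1 else 0) := by
  have hB : Ec + 1 ≤ Ec / ε := by
    rw [div_le_iff₀ (sub_pos.2 hε1)] at hE
    rw [le_div_iff₀ hε0]
    linarith
  refine ⟨fun j => ?_, fun j => ?_, fun j hj => ?_⟩
  · have := hx j; split_ifs <;> linarith
  · have := hxM j; split_ifs <;> linarith
  · by_cases hji : j = i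
    · rw [hji]
    · have := hxM j; simp only [hji, if_false, add_zero] at hj; linarith

theorem zhang_avalanche_no_adjacent_overcritical_general
    (d L : ℕ)
    (Ec ε : ℝ) (hε0 : 0 < ε) (hε1 : ε < 1)
    (hE : ε / (1 - ε) ≤ Ec)
    (x : Site d L → ℝ) (hx : ∀ i, 0 ≤ x i) (hxM : ∀ i, x i ≤ Ec)
    (i : Site d L) :
    let y : Site d L → ℝ := fun j => x j + if j = i then 1 else 0
    (∀ n j, (zhangF d L Ec ε)^[n] y j ≤ max (Ec / ε) (Ec + 1)) ∧
      (∀ n j k, Ec < (zhangF d L Ec ε)^[n] y j → Ec < (zhangF d L Ec ε)^[n] y k →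
        Even (dLam j k)) ∧
      (∀ n j k, Ec < (zhangF d L Ec ε)^[n] y j → Ec < (zhangF d L Ec ε)^[n] y k →
        dLam j k ≠ 1) := by
  intro y
  have hinv (n : ℕ) : AvalancheInvariant Ec ε (i.parity + n) ((zhangF d L Ec ε)^[n] y) :=
    (avalancheInvariant_add_unit hε0 hε1 hE hx hxM i).iterate hε0 hε1 n
  have heven (n : ℕ) (j k : Site d L) (hj : Ec < (zhangF d L Ec ε)^[n] y j)
      (hk : Ec < (zhangF d L Ec ε)^[n] y k) : Even (dLam j k) :=
    (even_dLam_iff j k).2 (((hinv n).parity_eq j hj).trans ((hinv n).parity_eq k hk).symm)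
  refine ⟨fun n j => ((hinv n).le_div j).trans (le_max_left _ _), heven, ?_⟩
  intro n j k hj hk h1
  exact Nat.not_even_one (h1 ▸ heven n j k hj hk)

theorem zhang_avalanche_no_adjacent_overcritical
    (d L : ℕ) (hd : 0 < d) (hL : 0 < L)
    (Ec ε : ℝ) (hEc : 0 < Ec) (hε0 : 0 < ε) (hε1 : ε < 1)
    (hE : ε / (1 - ε) ≤ Ec)
    (x : Site d L → ℝ) (hx : ∀ i, 0 ≤ x i) (hxM : ∀ i, x i ≤ Ec)
    (i : Site d L) :
    let y : Site d L → ℝ := fun j => x j + if j = i then 1 else 0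
    (∀ n j, (zhangF d L Ec ε)^[n] y j ≤ max (Ec / ε) (Ec + 1)) ∧
      (∀ n j k, Ec < (zhangF d L Ec ε)^[n] y j → Ec < (zhangF d L Ec ε)^[n] y k →
        Even (dLam j k)) ∧
      (∀ n j k, Ec < (zhangF d L Ec ε)^[n] y j → Ec < (zhangF d L Ec ε)^[n] y k →
        dLam j k ≠ 1) :=
  zhang_avalanche_no_adjacent_overcritical_general d L Ec ε hε0 hε1 hE x hx hxM i
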